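/- arXiv:1712.02222 — 3 statements merged into one kernel-verified Lean document; each statement's English description precedes it below -/
import Mathlib

section
/- Telescoped partial-update inequality. Let M ≥ 1, let E be a real inner product space, let C = (C_{ij}) be a real M×M matrix with C_{ij} = C_{ji} for all i, j and C_{ii} ≥ 0 for all i, and let a_1,…,a_M, b_1,…,b_M ∈ E. Then ½ Σ_{i,j=1}^M C_{ij} ⟨a_i, a_j⟩ − ½ Σ_{i,j=1}^M C_{ij} ⟨b_i, b_j⟩ ≤ Σ_{i=1}^M ( Σ_{j≤i} C_{ij} ⟨a_i − b_i, a_j⟩ + Σ_{j>i} C_{ij} ⟨a_i − b_i, b_j⟩ ). -/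
/-! With `d = a - b`, symmetry of `C` turns the left side into `½ ∑ C i j ⟪d i, a j + b j⟫`.
The right side replaces `a j + b j` by `2 a j` for `j ≤ i` and by `2 b j` for `j > i`, so it
exceeds the left side by `½ ∑ i (∑_{j ≤ i} - ∑_{j > i}) C i j ⟪d i, d j⟫`. By symmetry the strictly
lower and upper triangular parts cancel, leaving `½ ∑ C i i ‖d i‖² ≥ 0`. -/

open Finset RealInnerProductSpace

section
variable {ι : Type*} [Fintype ι]

theorem sum_sum_filter_le_sub_sum_sum_filter_gt {β : Type*} [AddCommGroup β] [LinearOrder ι]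
    {f : ι → ι → β} (hf : ∀ i j, f i j = f j i) :
    ∑ i, (∑ j ∈ univ.filter (· ≤ i), f i j - ∑ j ∈ univ.filter (i < ·), f i j) = ∑ i, f i i := by
  have hle (i : ι) : ∑ j ∈ univ.filter (· ≤ i), f i j = f i i + ∑ j ∈ univ.filter (· < i), f i j := by
    rw [← sum_insert (by simp)]
    congr 1
    ext j
    simp [le_iff_eq_or_lt]
  have hgt : ∑ i, ∑ j ∈ univ.filter (i < ·), f i j = ∑ i, ∑ j ∈ univ.filter (· < i), f i j := by
    rw [sum_comm' (t' := univ) (s' := fun j => univ.filter (· < j)) (by simp)]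
    exact sum_congr rfl fun i _ => sum_congr rfl fun j _ => hf j i
  simp only [sum_sub_distrib, hle, sum_add_distrib, hgt, add_sub_cancel_right]

variable {E : Type*} [NormedAddCommGroup E] [InnerProductSpace ℝ E]

theorem sum_sum_mul_inner_sub_sum_sum_mul_inner {C : ι → ι → ℝ} (hC : ∀ i j, C i j = C j i)
    (a b : ι → E) :
    ∑ i, ∑ j, C i j * ⟪a i, a j⟫ - ∑ i, ∑ j, C i j * ⟪b i, b j⟫
      = ∑ i, ∑ j, C i j * ⟪a i - b i, a j + b j⟫ := by
  have hswap : ∑ i, ∑ j, C i j * ⟪b i, a j⟫ = ∑ i, ∑ j, C i j * ⟪a i, b j⟫ := by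
    rw [sum_comm]
    exact sum_congr rfl fun i _ => sum_congr rfl fun j _ => by rw [hC, real_inner_comm]
  simp only [inner_sub_left, inner_add_right, mul_add, mul_sub, sum_add_distrib, sum_sub_distrib]
  linarith

theorem two_mul_sum_filter_le_add_sum_filter_gt [LinearOrder ι] (c : ι → ℝ) (i : ι) (u : E)
    (a b : ι → E) :
    2 * (∑ j ∈ univ.filter (· ≤ i), c j * ⟪u, a j⟫ + ∑ j ∈ univ.filter (i < ·), c j * ⟪u, b j⟫)
      = ∑ j, c j * ⟪u, a j + b j⟫
        + (∑ j ∈ univ.filter (· ≤ i), c j * ⟪u, a j - b j⟫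
          - ∑ j ∈ univ.filter (i < ·), c j * ⟪u, a j - b j⟫) := by
  rw [← sum_filter_add_sum_filter_not univ (· ≤ i)]
  simp only [not_le, inner_add_right, inner_sub_right, mul_add, mul_sub, sum_add_distrib,
    sum_sub_distrib]
  ring

theorem sum_filter_le_add_sum_filter_gt_eq [LinearOrder ι] {C : ι → ι → ℝ}
    (hC : ∀ i j, C i j = C j i) (a b : ι → E) :
    ∑ i, (∑ j ∈ univ.filter (· ≤ i), C i j * ⟪a i - b i, a j⟫
        + ∑ j ∈ univ.filter (i < ·), C i j * ⟪a i - b i, b j⟫)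
      = (1 / 2) * (∑ i, ∑ j, C i j * ⟪a i, a j⟫ - ∑ i, ∑ j, C i j * ⟪b i, b j⟫)
        + (1 / 2) * ∑ i, C i i * ⟪a i - b i, a i - b i⟫ := by
  have hdiag := sum_sum_filter_le_sub_sum_sum_filter_gt
    (f := fun i j => C i j * ⟪a i - b i, a j - b j⟫) fun i j => by rw [hC, real_inner_comm]
  have hrow (i : ι) := two_mul_sum_filter_le_add_sum_filter_gt (C i) i (a i - b i) a b
  rw [sum_sum_mul_inner_sub_sum_sum_mul_inner hC, ← hdiag, ← mul_add, ← sum_add_distrib, mul_sum]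
  exact sum_congr rfl fun i _ => by linarith [hrow i]

end

theorem telescoped_partial_update_inequality_general {M : ℕ}
    {E : Type*} [NormedAddCommGroup E] [InnerProductSpace ℝ E]
    (C : Matrix (Fin M) (Fin M) ℝ)
    (hsym : ∀ i j, C i j = C j i)
    (hdiag : ∀ i, 0 ≤ C i i)
    (a b : Fin M → E) :
    (1/2) * ∑ i, ∑ j, C i j * (inner ℝ (a i) (a j) : ℝ)
      - (1/2) * ∑ i, ∑ j, C i j * (inner ℝ (b i) (b j) : ℝ)
      ≤ ∑ i : Fin M,
          (∑ j ∈ Finset.univ.filter (fun j : Fin M => (j : ℕ) ≤ (i : ℕ)),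
              C i j * (inner ℝ (a i - b i) (a j) : ℝ)
           + ∑ j ∈ Finset.univ.filter (fun j : Fin M => (i : ℕ) < (j : ℕ)),
              C i j * (inner ℝ (a i - b i) (b j) : ℝ)) := by
  simp only [Fin.val_fin_le, Fin.val_fin_lt]
  rw [sum_filter_le_add_sum_filter_gt_eq hsym a b]
  have hdefect : 0 ≤ ∑ i, C i i * ⟪a i - b i, a i - b i⟫ :=
    sum_nonneg fun i _ => mul_nonneg (hdiag i) real_inner_self_nonneg
  linarith

/-- telescoped partial-update inequality.  For a symmetric matrix `C`
with nonnegative diagonal and vectors `a j, b j` in a real inner product space: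
`½ ∑_{i,j} C i j ⟪a i, a j⟫ − ½ ∑_{i,j} C i j ⟪b i, b j⟫
  ≤ ∑ i (∑_{j ≤ i} C i j ⟪a i − b i, a j⟫ + ∑_{j > i} C i j ⟪a i − b i, b j⟫)`. -/
theorem telescoped_partial_update_inequality {M : ℕ} (hM : 1 ≤ M)
    {E : Type*} [NormedAddCommGroup E] [InnerProductSpace ℝ E]
    (C : Matrix (Fin M) (Fin M) ℝ)
    (hsym : ∀ i j, C i j = C j i)
    (hdiag : ∀ i, 0 ≤ C i i)
    (a b : Fin M → E) :
    (1/2) * ∑ i, ∑ j, C i j * (inner ℝ (a i) (a j) : ℝ)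
      - (1/2) * ∑ i, ∑ j, C i j * (inner ℝ (b i) (b j) : ℝ)
      ≤ ∑ i : Fin M,
          (∑ j ∈ Finset.univ.filter (fun j : Fin M => (j : ℕ) ≤ (i : ℕ)),
              C i j * (inner ℝ (a i - b i) (a j) : ℝ)
           + ∑ j ∈ Finset.univ.filter (fun j : Fin M => (i : ℕ) < (j : ℕ)),
              C i j * (inner ℝ (a i - b i) (b j) : ℝ)) :=
  telescoped_partial_update_inequality_general C hsym hdiag a b
end

section
/- SAV free-energy difference bound (inequality (3.15) of the paper). Fix d ≥ 1, M ≥ 1, constants C_{T,i} ≥ 0, and a symmetric positive semidefinite real M×M matrix (c_{ij}). Let f_b : ℝ^M → ℝ be C¹ with f_b(0) = 0 and μ_i^b := ∂f_b/∂n_i. Let n^k, n^{k+1} : ℝ^d → ℝ^M be smooth and compactly supported, assume D := ∫ f_b(n^k) dx + Σ_j C_{T,j} ∫ n_j^k dx > 0, let H^k, H^{k+1} ∈ ℝ satisfy H^{k+1} − H^k = Σ_i ∫ (μ_i^b(n^k)/(2√D)) (n_i^{k+1} − n_i^k) dx, and define μ_i^{k+1} := ((H^{k+1}+H^k)/(2√D))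 μ_i^b(n^k) − Σ_j c_{ij} Δn_j^{k+1}. Then (H^{k+1})² − (H^k)² + ½ Σ_{i,j} ∫ c_{ij} ∇n_i^{k+1}·∇n_j^{k+1} dx − ½ Σ_{i,j} ∫ c_{ij} ∇n_i^k·∇n_j^k dx ≤ Σ_i ∫ μ_i^{k+1} (n_i^{k+1} − n_i^k) dx. -/
open MeasureTheory Matrix

noncomputable section

/-- points of `ℝ^d` -/
abbrev Vec (d : ℕ) := Fin d → ℝ

/-- partial derivative of a scalar field in coordinate direction `i` -/
def pd {d : ℕ} (i : Fin d) (f : Vec d → ℝ) : Vec d → ℝ :=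
  fun x => fderiv ℝ f x (Pi.single i 1)

/-- gradient of a scalar field -/
def gradf {d : ℕ} (f : Vec d → ℝ) : Vec d → Vec d :=
  fun x i => pd i f x

/-- divergence `∇·F = ∑ₖ ∂Fₖ/∂xₖ` of a vector field -/
def divv {d : ℕ} (F : Vec d → Vec d) : Vec d → ℝ :=
  fun x => ∑ i, fderiv ℝ F x (Pi.single i 1) i

/-- Laplacian of a scalar field -/
def lapf {d : ℕ} (f : Vec d → ℝ) : Vec d → ℝ :=
  fun x => ∑ i, pd i (pd i f) x

/-- Jacobian matrix `(∂uᵢ/∂xⱼ)` of a vector field -/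
def jac {d : ℕ} (u : Vec d → Vec d) : Vec d → Matrix (Fin d) (Fin d) ℝ :=
  fun x i j => fderiv ℝ u x (Pi.single j 1) i

/-- row-wise divergence of a matrix-valued field: `(∇·A)ᵢ = ∑ₖ ∂Aᵢₖ/∂xₖ` -/
def matdiv {d : ℕ} (A : Vec d → Matrix (Fin d) (Fin d) ℝ) : Vec d → Vec d :=
  fun x i => ∑ k, fderiv ℝ (fun y => A y i k) x (Pi.single k 1)

/-- Euclidean dot product on `ℝ^d` -/
def dot {d : ℕ} (a b : Vec d) : ℝ := ∑ i, a i * b i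

/-- squared Frobenius norm of a real matrix -/
def frob2 {d : ℕ} (A : Matrix (Fin d) (Fin d) ℝ) : ℝ := ∑ i, ∑ j, (A i j)^2

section helpers
variable {d : ℕ}

lemma pd_contDiff {f : Vec d → ℝ} (hf : ContDiff ℝ (⊤ : ℕ∞) f) (k : Fin d) :
    ContDiff ℝ (⊤ : ℕ∞) (pd k f) := by
  have h1 : ContDiff ℝ (⊤ : ℕ∞) (fderiv ℝ f) := hf.fderiv_right (by simp)
  exact (ContinuousLinearMap.apply ℝ ℝ (Pi.single k 1 : Vec d)).contDiff.comp h1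

lemma pd_supp {f : Vec d → ℝ} (hf : HasCompactSupport f) (k : Fin d) :
    HasCompactSupport (pd k f) :=
  hf.fderiv_apply ℝ (Pi.single k 1)

lemma lapf_cont {f : Vec d → ℝ} (hf : ContDiff ℝ (⊤ : ℕ∞) f) : Continuous (lapf f) := by
  have : Continuous fun x : Vec d => ∑ k, pd k (pd k f) x :=
    continuous_finset_sum _ fun k _ => (pd_contDiff (pd_contDiff hf k) k).continuous
  exact this

lemma hcs_sub {f g : Vec d → ℝ} (hf : HasCompactSupport f) (hg : HasCompactSupport g) :
    HasCompactSupport (fun x => f x - g x) := by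
  exact hf.sub hg

lemma integ_mul {a b : Vec d → ℝ} (ha : Continuous a) (hb : Continuous b)
    (hbs : HasCompactSupport b) : Integrable (fun x : Vec d => a x * b x) :=
  (ha.mul hb).integrable_of_hasCompactSupport hbs.mul_left

lemma ibp (k : Fin d) {f g : Vec d → ℝ}
    (hf : ContDiff ℝ (⊤ : ℕ∞) f) (hfs : HasCompactSupport f)
    (hg : ContDiff ℝ (⊤ : ℕ∞) g) (hgs : HasCompactSupport g) :
    ∫ x : Vec d, pd k f x * g x = - ∫ x : Vec d, pd k g x * f x := by
  obtain ⟨C, hC⟩ := ContDiff.lipschitzWith_of_hasCompactSupport hfs hf (by simp)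
  obtain ⟨D, hD⟩ := ContDiff.lipschitzWith_of_hasCompactSupport hgs hg (by simp)
  have h := hC.integral_lineDeriv_mul_eq hD hgs (Pi.single k 1) (μ := volume)
  have h1 : ∀ x : Vec d, lineDeriv ℝ f x (Pi.single k 1) = pd k f x := fun x =>
    ((hf.differentiable (by simp)) x).lineDeriv_eq_fderiv
  have h2 : ∀ x : Vec d, lineDeriv ℝ g x (-Pi.single k 1) = - pd k g x := fun x => by
    rw [((hg.differentiable (by simp)) x).lineDeriv_eq_fderiv]; simp [pd]
  simp only [h1, h2, neg_mul] at h
  rw [h, integral_neg]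

lemma lap_ibp {f g : Vec d → ℝ}
    (hf : ContDiff ℝ (⊤ : ℕ∞) f) (hfs : HasCompactSupport f)
    (hg : ContDiff ℝ (⊤ : ℕ∞) g) (hgs : HasCompactSupport g) :
    ∫ x : Vec d, lapf f x * g x = - ∫ x : Vec d, dot (gradf f x) (gradf g x) := by
  have key : ∀ k : Fin d, ∫ x : Vec d, pd k (pd k f) x * g x
      = - ∫ x : Vec d, pd k f x * pd k g x := by
    intro k
    rw [ibp k (pd_contDiff hf k) (pd_supp hfs k) hg hgs]
    congr 1
    exact congrArg _ (funext fun x => mul_comm _ _)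
  calc ∫ x : Vec d, lapf f x * g x = ∫ x : Vec d, ∑ k, pd k (pd k f) x * g x := by
        simp only [lapf, Finset.sum_mul]
    _ = ∑ k, ∫ x : Vec d, pd k (pd k f) x * g x :=
        integral_finset_sum _ fun k _ =>
          integ_mul (pd_contDiff (pd_contDiff hf k) k).continuous hg.continuous hgs
    _ = ∑ k, -(∫ x : Vec d, pd k f x * pd k g x) := by simp only [key]
    _ = - ∑ k, ∫ x : Vec d, pd k f x * pd k g x := by rw [Finset.sum_neg_distrib]
    _ = - ∫ x : Vec d, ∑ k, pd k f x * pd k g x := by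
        rw [integral_finset_sum _ fun k _ =>
          integ_mul (pd_contDiff hf k).continuous (pd_contDiff hg k).continuous (pd_supp hgs k)]
    _ = - ∫ x : Vec d, dot (gradf f x) (gradf g x) := rfl

lemma integ_dot {f g : Vec d → ℝ}
    (hf : ContDiff ℝ (⊤ : ℕ∞) f) (hg : ContDiff ℝ (⊤ : ℕ∞) g) (hgs : HasCompactSupport g) :
    Integrable (fun x : Vec d => dot (gradf f x) (gradf g x)) := by
  have : Integrable (fun x : Vec d => ∑ k, pd k f x * pd k g x) :=
    integrable_finset_sum _ fun k _ =>
      integ_mul (pd_contDiff hf k).continuous (pd_contDiff hg k).continuous (pd_supp hgs k)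
  exact this

lemma dot_comm (a b : Vec d) : dot a b = dot b a :=
  Finset.sum_congr rfl fun k _ => mul_comm _ _

lemma dot_expand (a b c e : Vec d) :
    dot (a - b) (c - e) = dot a c - dot a e - dot b c + dot b e := by
  simp only [dot, Pi.sub_apply]
  rw [← Finset.sum_sub_distrib, ← Finset.sum_sub_distrib, ← Finset.sum_add_distrib]
  exact Finset.sum_congr rfl fun k _ => by ring

lemma final_algebra {M : ℕ} (c : Matrix (Fin M) (Fin M) ℝ)
    (hcsym : ∀ i j, c i j = c j i) (P Q R : Fin M → Fin M → ℝ)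
    (hPsym : ∀ i j, P i j = P j i)
    (hS : 0 ≤ ∑ i, ∑ j, c i j * (P i j - Q i j - Q j i + R i j)) :
    (1/2) * (∑ i, ∑ j, c i j * P i j) - (1/2) * (∑ i, ∑ j, c i j * R i j)
      ≤ ∑ i, ∑ j, c i j * (P j i - Q j i) := by
  have h1 : ∑ i, ∑ j, c i j * Q i j = ∑ i, ∑ j, c i j * Q j i := by
    rw [Finset.sum_comm]
    exact Finset.sum_congr rfl fun i _ => Finset.sum_congr rfl fun j _ => by rw [hcsym]
  have h2 : ∑ i, ∑ j, c i j * P j i = ∑ i, ∑ j, c i j * P i j :=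
    Finset.sum_congr rfl fun i _ => Finset.sum_congr rfl fun j _ => by rw [hPsym]
  simp only [mul_sub, mul_add, Finset.sum_sub_distrib, Finset.sum_add_distrib] at hS ⊢
  linarith

end helpers

/-- SAV free-energy difference bound (inequality (3.15)).
With `μᵢᵇ = ∂f_b/∂nᵢ`, `D = ∫ f_b(nᵏ) + ∑ⱼ C_{T,j} ∫ nⱼᵏ > 0`, the SAV update
`Hᵏ⁺¹ − Hᵏ = ∑ᵢ ∫ (μᵢᵇ(nᵏ)/(2√D)) (nᵢᵏ⁺¹ − nᵢᵏ)`, and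
`μᵢᵏ⁺¹ = ((Hᵏ⁺¹+Hᵏ)/(2√D)) μᵢᵇ(nᵏ) − ∑ⱼ cᵢⱼ Δnⱼᵏ⁺¹`, one has
`(Hᵏ⁺¹)² − (Hᵏ)² + ½∑ᵢⱼ∫cᵢⱼ∇nᵢᵏ⁺¹·∇nⱼᵏ⁺¹ − ½∑ᵢⱼ∫cᵢⱼ∇nᵢᵏ·∇nⱼᵏ
  ≤ ∑ᵢ ∫ μᵢᵏ⁺¹ (nᵢᵏ⁺¹ − nᵢᵏ)`. -/
theorem sav_free_energy_difference_bound {d M : ℕ} (hd : 1 ≤ d) (hM : 1 ≤ M)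
    (CT : Fin M → ℝ) (hCT : ∀ i, 0 ≤ CT i)
    (c : Matrix (Fin M) (Fin M) ℝ)
    (hcsym : ∀ i j, c i j = c j i)
    (hcpsd : ∀ ξ : Fin M → ℝ, 0 ≤ ∑ i, ∑ j, c i j * ξ i * ξ j)
    (fb : (Fin M → ℝ) → ℝ) (hfb : ContDiff ℝ 1 fb) (hfb0 : fb 0 = 0)
    (μb : Fin M → (Fin M → ℝ) → ℝ)
    (hμb : ∀ i ν, μb i ν = fderiv ℝ fb ν (Pi.single i 1))
    (nk nk1 : Fin M → Vec d → ℝ)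
    (hnk_smooth : ∀ i, ContDiff ℝ (⊤ : ℕ∞) (nk i)) (hnk_supp : ∀ i, HasCompactSupport (nk i))
    (hnk1_smooth : ∀ i, ContDiff ℝ (⊤ : ℕ∞) (nk1 i)) (hnk1_supp : ∀ i, HasCompactSupport (nk1 i))
    (D : ℝ)
    (hD : D = (∫ x : Vec d, fb (fun j => nk j x)) + ∑ j, CT j * ∫ x : Vec d, nk j x)
    (hDpos : 0 < D)
    (Hk Hk1 : ℝ)
    (hH : Hk1 - Hk
      = ∑ i, ∫ x : Vec d, (μb i (fun j => nk j x) / (2 * Real.sqrt D)) * (nk1 i x - nk i x))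
    (μ : Fin M → Vec d → ℝ)
    (hμ : ∀ i x, μ i x
      = ((Hk1 + Hk) / (2 * Real.sqrt D)) * μb i (fun j => nk j x)
        - ∑ j, c i j * lapf (nk1 j) x) :
    Hk1^2 - Hk^2
      + (1/2) * (∑ i, ∑ j, ∫ x : Vec d, c i j * dot (gradf (nk1 i) x) (gradf (nk1 j) x))
      - (1/2) * (∑ i, ∑ j, ∫ x : Vec d, c i j * dot (gradf (nk i) x) (gradf (nk j) x))
      ≤ ∑ i, ∫ x : Vec d, μ i x * (nk1 i x - nk i x) := by
  have hnkc : ∀ i, Continuous (nk i) := fun i => (hnk_smooth i).continuous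
  have hnk1c : ∀ i, Continuous (nk1 i) := fun i => (hnk1_smooth i).continuous
  have hmuc : ∀ i, Continuous (fun x : Vec d => μb i (fun j => nk j x)) := by
    intro i
    have h1 : Continuous (fun ν : Fin M → ℝ => fderiv ℝ fb ν) := hfb.continuous_fderiv (by simp)
    have h2 : Continuous (fun ν : Fin M → ℝ => fderiv ℝ fb ν (Pi.single i 1)) :=
      (ContinuousLinearMap.apply ℝ ℝ (Pi.single i 1 : Fin M → ℝ)).continuous.comp h1
    have h3 : Continuous (fun x : Vec d => (fun j => nk j x)) := continuous_pi fun j => hnkc j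
    simpa only [hμb, Function.comp_def] using h2.comp h3
  -- abbreviations
  set P : Fin M → Fin M → ℝ :=
    fun i j => ∫ x : Vec d, dot (gradf (nk1 i) x) (gradf (nk1 j) x) with hPdef
  set Q : Fin M → Fin M → ℝ :=
    fun i j => ∫ x : Vec d, dot (gradf (nk1 i) x) (gradf (nk j) x) with hQdef
  set R : Fin M → Fin M → ℝ :=
    fun i j => ∫ x : Vec d, dot (gradf (nk i) x) (gradf (nk j) x) with hRdef
  -- per-i computation of the right-hand side
  have hi : ∀ i, ∫ x : Vec d, μ i x * (nk1 i x - nk i x)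
      = (Hk1 + Hk) * (∫ x : Vec d,
          (μb i (fun j => nk j x) / (2 * Real.sqrt D)) * (nk1 i x - nk i x))
        + ∑ j, c i j * (P j i - Q j i) := by
    intro i
    have intA : Integrable (fun x : Vec d =>
        (((Hk1 + Hk) / (2 * Real.sqrt D)) * μb i (fun j => nk j x)) * (nk1 i x - nk i x)) :=
      integ_mul (continuous_const.mul (hmuc i)) ((hnk1c i).sub (hnkc i))
        (hcs_sub (hnk1_supp i) (hnk_supp i))
    have intB : ∀ j, Integrable (fun x : Vec d =>
        c i j * (lapf (nk1 j) x * (nk1 i x - nk i x))) := fun j =>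
      (integ_mul (lapf_cont (hnk1_smooth j)) ((hnk1c i).sub (hnkc i))
        (hcs_sub (hnk1_supp i) (hnk_supp i))).const_mul _
    have step1 : (fun x : Vec d => μ i x * (nk1 i x - nk i x))
        = fun x => (((Hk1 + Hk) / (2 * Real.sqrt D)) * μb i (fun j => nk j x))
              * (nk1 i x - nk i x)
            - ∑ j, c i j * (lapf (nk1 j) x * (nk1 i x - nk i x)) := by
      funext x
      rw [hμ i x, sub_mul, Finset.sum_mul]
      simp only [mul_assoc]
    have hlap : ∀ j, ∫ x : Vec d, lapf (nk1 j) x * (nk1 i x - nk i x)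
        = -(P j i - Q j i) := by
      intro j
      have i1 : Integrable (fun x : Vec d => lapf (nk1 j) x * nk1 i x) :=
        integ_mul (lapf_cont (hnk1_smooth j)) (hnk1c i) (hnk1_supp i)
      have i2 : Integrable (fun x : Vec d => lapf (nk1 j) x * nk i x) :=
        integ_mul (lapf_cont (hnk1_smooth j)) (hnkc i) (hnk_supp i)
      calc ∫ x : Vec d, lapf (nk1 j) x * (nk1 i x - nk i x)
          = (∫ x : Vec d, lapf (nk1 j) x * nk1 i x)
            - ∫ x : Vec d, lapf (nk1 j) x * nk i x := by
            rw [← integral_sub i1 i2]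
            exact congrArg _ (funext fun x => mul_sub _ _ _)
        _ = -(P j i - Q j i) := by
            rw [lap_ibp (hnk1_smooth j) (hnk1_supp j) (hnk1_smooth i) (hnk1_supp i),
              lap_ibp (hnk1_smooth j) (hnk1_supp j) (hnk_smooth i) (hnk_supp i)]
            simp only [hPdef, hQdef]
            ring
    calc ∫ x : Vec d, μ i x * (nk1 i x - nk i x)
        = (∫ x : Vec d, (((Hk1 + Hk) / (2 * Real.sqrt D)) * μb i (fun j => nk j x))
              * (nk1 i x - nk i x))
          - ∫ x : Vec d, ∑ j, c i j * (lapf (nk1 j) x * (nk1 i x - nk i x)) := by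
          rw [step1, integral_sub intA (integrable_finset_sum _ fun j _ => intB j)]
      _ = (Hk1 + Hk) * (∫ x : Vec d,
            (μb i (fun j => nk j x) / (2 * Real.sqrt D)) * (nk1 i x - nk i x))
          - ∑ j, c i j * ∫ x : Vec d, lapf (nk1 j) x * (nk1 i x - nk i x) := by
          rw [integral_finset_sum _ fun j _ => intB j]
          congr 1
          · rw [← integral_const_mul]
            exact congrArg _ (funext fun x => by ring)
          · exact Finset.sum_congr rfl fun j _ => integral_const_mul _ _
      _ = _ := by
          simp only [hlap, mul_neg, Finset.sum_neg_distrib, sub_neg_eq_add]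
  have hRHS : ∑ i, ∫ x : Vec d, μ i x * (nk1 i x - nk i x)
      = (Hk1 + Hk) * (Hk1 - Hk) + ∑ i, ∑ j, c i j * (P j i - Q j i) := by
    rw [hH, Finset.mul_sum, ← Finset.sum_add_distrib]
    exact Finset.sum_congr rfl fun i _ => hi i
  -- integrability of the various dot products
  have i11 : ∀ i j, Integrable (fun x : Vec d => dot (gradf (nk1 i) x) (gradf (nk1 j) x)) :=
    fun i j => integ_dot (hnk1_smooth i) (hnk1_smooth j) (hnk1_supp j)
  have i10 : ∀ i j, Integrable (fun x : Vec d => dot (gradf (nk1 i) x) (gradf (nk j) x)) :=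
    fun i j => integ_dot (hnk1_smooth i) (hnk_smooth j) (hnk_supp j)
  have i01 : ∀ i j, Integrable (fun x : Vec d => dot (gradf (nk i) x) (gradf (nk1 j) x)) :=
    fun i j => integ_dot (hnk_smooth i) (hnk1_smooth j) (hnk1_supp j)
  have i00 : ∀ i j, Integrable (fun x : Vec d => dot (gradf (nk i) x) (gradf (nk j) x)) :=
    fun i j => integ_dot (hnk_smooth i) (hnk_smooth j) (hnk_supp j)
  -- positivity of the quadratic form term
  have hfun : ∀ i j, (fun x : Vec d => c i j *
      dot (gradf (nk1 i) x - gradf (nk i) x) (gradf (nk1 j) x - gradf (nk j) x))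
      = fun x => c i j * (dot (gradf (nk1 i) x) (gradf (nk1 j) x)
          - dot (gradf (nk1 i) x) (gradf (nk j) x)
          - dot (gradf (nk i) x) (gradf (nk1 j) x)
          + dot (gradf (nk i) x) (gradf (nk j) x)) :=
    fun i j => funext fun x => by rw [dot_expand]
  have iF : ∀ i j, Integrable (fun x : Vec d => c i j *
      dot (gradf (nk1 i) x - gradf (nk i) x) (gradf (nk1 j) x - gradf (nk j) x)) := by
    intro i j
    rw [hfun i j]
    exact ((((i11 i j).sub (i10 i j)).sub (i01 i j)).add (i00 i j)).const_mul _
  have key : ∀ i j, c i j * (P i j - Q i j - Q j i + R i j)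
      = ∫ x : Vec d, c i j *
          dot (gradf (nk1 i) x - gradf (nk i) x) (gradf (nk1 j) x - gradf (nk j) x) := by
    intro i j
    have h3 : ∫ x : Vec d, dot (gradf (nk i) x) (gradf (nk1 j) x) = Q j i :=
      congrArg _ (funext fun x => dot_comm _ _)
    rw [show (∫ x : Vec d, c i j *
        dot (gradf (nk1 i) x - gradf (nk i) x) (gradf (nk1 j) x - gradf (nk j) x))
      = c i j * ∫ x : Vec d, (dot (gradf (nk1 i) x) (gradf (nk1 j) x)
          - dot (gradf (nk1 i) x) (gradf (nk j) x)
          - dot (gradf (nk i) x) (gradf (nk1 j) x)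
          + dot (gradf (nk i) x) (gradf (nk j) x)) from by
        rw [hfun i j, integral_const_mul]]
    have iA : Integrable (fun x : Vec d => dot (gradf (nk1 i) x) (gradf (nk1 j) x)
        - dot (gradf (nk1 i) x) (gradf (nk j) x)) := (i11 i j).sub (i10 i j)
    have iB : Integrable (fun x : Vec d => (dot (gradf (nk1 i) x) (gradf (nk1 j) x)
        - dot (gradf (nk1 i) x) (gradf (nk j) x)) - dot (gradf (nk i) x) (gradf (nk1 j) x)) :=
      iA.sub (i01 i j)
    rw [integral_add iB (i00 i j), integral_sub iA (i01 i j),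
      integral_sub (i11 i j) (i10 i j), h3]
  have hS : 0 ≤ ∑ i, ∑ j, c i j * (P i j - Q i j - Q j i + R i j) := by
    have hsum : ∑ i, ∑ j, c i j * (P i j - Q i j - Q j i + R i j)
        = ∫ x : Vec d, ∑ i, ∑ j, c i j *
            dot (gradf (nk1 i) x - gradf (nk i) x) (gradf (nk1 j) x - gradf (nk j) x) := by
      simp only [key]
      calc ∑ i, ∑ j, ∫ x : Vec d, c i j *
            dot (gradf (nk1 i) x - gradf (nk i) x) (gradf (nk1 j) x - gradf (nk j) x)
          = ∑ i, ∫ x : Vec d, ∑ j, c i j *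
              dot (gradf (nk1 i) x - gradf (nk i) x) (gradf (nk1 j) x - gradf (nk j) x) :=
            Finset.sum_congr rfl fun i _ => (integral_finset_sum _ fun j _ => iF i j).symm
        _ = _ := (integral_finset_sum _ fun i _ =>
            integrable_finset_sum _ fun j _ => iF i j).symm
    rw [hsum]
    refine integral_nonneg fun x => ?_
    have e1 : ∑ i, ∑ j, c i j *
        dot (gradf (nk1 i) x - gradf (nk i) x) (gradf (nk1 j) x - gradf (nk j) x)
        = ∑ k : Fin d, ∑ i, ∑ j, c i j * (gradf (nk1 i) x - gradf (nk i) x) k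
            * (gradf (nk1 j) x - gradf (nk j) x) k := by
      simp only [dot, Finset.mul_sum, ← mul_assoc]
      calc ∑ i, ∑ j, ∑ k : Fin d, c i j * (gradf (nk1 i) x - gradf (nk i) x) k
            * (gradf (nk1 j) x - gradf (nk j) x) k
          = ∑ i, ∑ k : Fin d, ∑ j, c i j * (gradf (nk1 i) x - gradf (nk i) x) k
              * (gradf (nk1 j) x - gradf (nk j) x) k :=
            Finset.sum_congr rfl fun i _ => Finset.sum_comm
        _ = _ := Finset.sum_comm
    rw [e1]
    exact Finset.sum_nonneg fun k _ =>
      hcpsd (fun i => (gradf (nk1 i) x - gradf (nk i) x) k)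
  have hPsym : ∀ i j, P i j = P j i := fun i j =>
    congrArg _ (funext fun x => dot_comm _ _)
  have halg := final_algebra c hcsym P Q R hPsym hS
  have hLHS1 : ∀ i j, (∫ x : Vec d, c i j * dot (gradf (nk1 i) x) (gradf (nk1 j) x))
      = c i j * P i j := fun i j => integral_const_mul _ _
  have hLHS2 : ∀ i j, (∫ x : Vec d, c i j * dot (gradf (nk i) x) (gradf (nk j) x))
      = c i j * R i j := fun i j => integral_const_mul _ _
  simp only [hLHS1, hLHS2]
  rw [hRHS]
  nlinarith [halg]
end
end

section
/- Intermediate kinetic-energy bound (inequality (3.22) of the paper). Fix d ≥ 1, M ≥ 1, δt > 0 and molar weights M_{w,i} > 0. Let n_1,…,n_M : ℝ^d → ℝ be smooth, compactly supported and nonnegative, set ρ := Σ_i M_{w,i} n_i, let μ_1,…,μ_M : ℝ^d → ℝ be smooth, let u : ℝ^d → ℝ^d be smooth with ρ|u|² Lebesgue integrable, and let u_* : ℝ^d → ℝ^d be smooth with ρ (u_* − u) = −δt Σ_i n_i ∇μ_i on ℝ^d and ρ|u_*|² Lebesgue integrable. Then ½ ∫ ρ |u_*|² dx − ½ ∫ ρ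 |u|² dx ≤ δt Σ_i ∫ ∇·(n_i u_*) μ_i dx. -/
open Metric Filter


open MeasureTheory Matrix

noncomputable section

section Aux

lemma smooth_cs_lipschitz {d : ℕ} {f : Vec d → ℝ} (hf : ContDiff ℝ (⊤ : ℕ∞) f)
    (hs : HasCompactSupport f) : ∃ C : NNReal, LipschitzWith C f := by
  obtain ⟨C, hC⟩ := ((hf.continuous_fderiv (by simp)).bounded_above_of_compact_support (hs.fderiv (𝕜 := ℝ)))
  refine ⟨Real.toNNReal C, lipschitzWith_of_nnnorm_fderiv_le
    (hf.differentiable (by simp)) fun x => ?_⟩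
  rw [← NNReal.coe_le_coe, Real.coe_toNNReal']
  exact le_trans (hC x) (le_max_left _ _)

lemma integral_fderiv_single_eq_zero {d : ℕ} {f : Vec d → ℝ} (hf : ContDiff ℝ (⊤ : ℕ∞) f)
    (hs : HasCompactSupport f) (v : Vec d) :
    ∫ x : Vec d, fderiv ℝ f x v = 0 := by
  obtain ⟨R, hR0, hRsub⟩ := hs.isBounded.subset_ball_lt 0 0
  set φ : ContDiffBump (0 : Vec d) := ⟨R + 1, R + 2, by linarith, by linarith⟩
  obtain ⟨C, hC⟩ := smooth_cs_lipschitz hf hs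
  obtain ⟨D, hD⟩ := smooth_cs_lipschitz (φ.contDiff (n := (⊤ : ℕ∞))) φ.hasCompactSupport
  have key := hC.integral_lineDeriv_mul_eq hD φ.hasCompactSupport v (μ := volume)
  have h1 : ∀ x : Vec d, lineDeriv ℝ f x v * φ x = fderiv ℝ f x v := by
    intro x
    by_cases hx : x ∈ ball (0 : Vec d) (R + 1)
    · rw [(hf.differentiable (by simp) x).lineDeriv_eq_fderiv,
        φ.one_of_mem_closedBall (ball_subset_closedBall hx), mul_one]
    · have hx' : x ∉ tsupport f := fun h =>
        hx (ball_subset_ball (by linarith) (hRsub h))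
      have hz : f =ᶠ[nhds x] 0 :=
        eventually_of_mem ((isClosed_tsupport f).isOpen_compl.mem_nhds hx')
          fun y hy => image_eq_zero_of_notMem_tsupport hy
      have : fderiv ℝ f x = 0 := by
        rw [hz.fderiv_eq]; exact fderiv_const_apply 0
      rw [(hf.differentiable (by simp) x).lineDeriv_eq_fderiv, this]
      simp
  have h2 : ∀ x : Vec d, lineDeriv ℝ (φ : Vec d → ℝ) x (-v) * f x = 0 := by
    intro x
    by_cases hx : f x = 0
    · rw [hx, mul_zero]
    · have hx' : x ∈ ball (0 : Vec d) (R + 1) :=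
        ball_subset_ball (by linarith) (hRsub (subset_tsupport f hx))
      have hφ1 : (φ : Vec d → ℝ) =ᶠ[nhds x] fun _ => 1 :=
        eventually_of_mem (isOpen_ball.mem_nhds hx') fun y hy =>
          φ.one_of_mem_closedBall (ball_subset_closedBall hy)
      have : fderiv ℝ (φ : Vec d → ℝ) x = 0 := by
        rw [hφ1.fderiv_eq]; exact fderiv_const_apply 1
      rw [(((φ.contDiff (n := (⊤ : ℕ∞)))).differentiable (by simp) x).lineDeriv_eq_fderiv, this]
      simp
  calc ∫ x : Vec d, fderiv ℝ f x v = ∫ x : Vec d, lineDeriv ℝ f x v * φ x := by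
        simp_rw [h1]
    _ = ∫ x : Vec d, lineDeriv ℝ (φ : Vec d → ℝ) x (-v) * f x := key
    _ = 0 := by simp_rw [h2, integral_zero]

lemma fderiv_eq_zero_of_nmem_tsupport {d : ℕ} {f : Vec d → ℝ} {x : Vec d}
    (hx : x ∉ tsupport f) : fderiv ℝ f x = 0 := by
  have hz : f =ᶠ[nhds x] 0 :=
    eventually_of_mem ((isClosed_tsupport f).isOpen_compl.mem_nhds hx)
      fun y hy => image_eq_zero_of_notMem_tsupport hy
  rw [hz.fderiv_eq]; exact fderiv_const_apply 0

lemma ibp_single {d : ℕ} {f g : Vec d → ℝ} (hf : ContDiff ℝ (⊤ : ℕ∞) f)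
    (hfs : HasCompactSupport f) (hg : ContDiff ℝ (⊤ : ℕ∞) g) (v : Vec d) :
    ∫ x : Vec d, fderiv ℝ f x v * g x = - ∫ x : Vec d, f x * fderiv ℝ g x v := by
  have h0 := integral_fderiv_single_eq_zero (hf.mul hg) (hfs.mul_right) v
  have heq : (fun x : Vec d => fderiv ℝ (fun y => f y * g y) x v)
      = fun x => f x * fderiv ℝ g x v + fderiv ℝ f x v * g x := by
    funext x
    rw [fderiv_fun_mul (hf.differentiable (by simp) x)
      (hg.differentiable (by simp) x)]
    simp [smul_eq_mul]; ring
  rw [heq] at h0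
  have hA : Integrable (fun x : Vec d => fderiv ℝ f x v * g x) := by
    apply Continuous.integrable_of_hasCompactSupport
    · exact ((hf.continuous_fderiv (by simp)).clm_apply continuous_const).mul
        (hg.continuous)
    · exact HasCompactSupport.intro hfs fun x hx => by
        rw [fderiv_eq_zero_of_nmem_tsupport hx]; simp
  have hB : Integrable (fun x : Vec d => f x * fderiv ℝ g x v) := by
    apply Continuous.integrable_of_hasCompactSupport
    · exact (hf.continuous).mul
        ((hg.continuous_fderiv (by simp)).clm_apply continuous_const)
    · exact HasCompactSupport.intro hfs fun x hx => by
        rw [image_eq_zero_of_notMem_tsupport hx]; simp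
  rw [integral_add hB hA] at h0
  linarith

end Aux

/-- intermediate kinetic-energy bound (inequality (3.22)).
If `ρ = ∑ᵢ M_{w,i} nᵢ` and the intermediate velocity `u_*` satisfies
`ρ (u_* − u) = −δt ∑ᵢ nᵢ ∇μᵢ`, then
`½ ∫ ρ |u_*|² − ½ ∫ ρ |u|² ≤ δt ∑ᵢ ∫ ∇·(nᵢ u_*) μᵢ`. -/
theorem intermediate_kinetic_energy_bound {d M : ℕ} (hd : 1 ≤ d) (hM : 1 ≤ M)
    (δt : ℝ) (hδt : 0 < δt)
    (Mw : Fin M → ℝ) (hMw : ∀ i, 0 < Mw i)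
    (n : Fin M → Vec d → ℝ)
    (hn_smooth : ∀ i, ContDiff ℝ (⊤ : ℕ∞) (n i))
    (hn_supp : ∀ i, HasCompactSupport (n i))
    (hn_nonneg : ∀ i x, 0 ≤ n i x)
    (ρ : Vec d → ℝ) (hρ : ∀ x, ρ x = ∑ i, Mw i * n i x)
    (μ : Fin M → Vec d → ℝ) (hμ : ∀ i, ContDiff ℝ (⊤ : ℕ∞) (μ i))
    (u : Vec d → Vec d) (hu : ContDiff ℝ (⊤ : ℕ∞) u)
    (hu_int : Integrable (fun x : Vec d => ρ x * dot (u x) (u x)))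
    (ustar : Vec d → Vec d) (hustar_smooth : ContDiff ℝ (⊤ : ℕ∞) ustar)
    (hustar : ∀ x, ρ x • (ustar x - u x) = -(δt • ∑ i, n i x • gradf (μ i) x))
    (hustar_int : Integrable (fun x : Vec d => ρ x * dot (ustar x) (ustar x))) :
    (1/2) * (∫ x : Vec d, ρ x * dot (ustar x) (ustar x))
      - (1/2) * (∫ x : Vec d, ρ x * dot (u x) (u x))
      ≤ δt * ∑ i, ∫ x : Vec d, divv (fun y => n i y • ustar y) x * μ i x := by
  -- downgraded smoothness
  have hn' : ∀ i, ContDiff ℝ (⊤ : ℕ∞) (n i) := fun i => (hn_smooth i).of_le (by simp)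
  have hμ' : ∀ i, ContDiff ℝ (⊤ : ℕ∞) (μ i) := fun i => (hμ i).of_le (by simp)
  have hust' : ContDiff ℝ (⊤ : ℕ∞) ustar := hustar_smooth.of_le (by simp)
  have hustk : ∀ k : Fin d, ContDiff ℝ (⊤ : ℕ∞) (fun y => ustar y k) := fun k =>
    contDiff_pi.1 hust' k
  have hρ_nonneg : ∀ x, 0 ≤ ρ x := fun x => by
    rw [hρ x]
    exact Finset.sum_nonneg fun i _ => mul_nonneg (hMw i).le (hn_nonneg i x)
  -- the key auxiliary functions
  set G : Fin M → Vec d → ℝ := fun i x => n i x * dot (gradf (μ i) x) (ustar x) with hGdef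
  have hG_cont : ∀ i, Continuous (G i) := by
    intro i
    apply ((hn' i).continuous).mul
    have : Continuous fun x => dot (gradf (μ i) x) (ustar x) := by
      apply continuous_finset_sum
      intro k _
      exact (((hμ' i).continuous_fderiv (by simp)).clm_apply continuous_const).mul
        ((hustk k).continuous)
    exact this
  have hG_int : ∀ i, Integrable (G i) := by
    intro i
    apply (hG_cont i).integrable_of_hasCompactSupport
    exact HasCompactSupport.intro (hn_supp i) fun x hx => by
      simp [hGdef, image_eq_zero_of_notMem_tsupport hx]
  -- H = ρ (u* - u) · u*
  set H : Vec d → ℝ := fun x => ρ x * dot (ustar x - u x) (ustar x) with hHdef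
  have hH_eq : ∀ x, H x = -δt * ∑ i, G i x := by
    intro x
    have h := hustar x
    have h1 : ∀ j, ρ x * (ustar x j - u x j)
        = -(δt * ∑ i, n i x * gradf (μ i) x j) := fun j => by
      have := congrFun h j
      simpa [Finset.sum_apply] using this
    calc H x = ∑ j, ρ x * (ustar x j - u x j) * ustar x j := by
          simp only [hHdef, dot, Pi.sub_apply, Finset.mul_sum, mul_assoc]
      _ = ∑ j, ∑ i, (-δt) * (n i x * (gradf (μ i) x j * ustar x j)) := by
          refine Finset.sum_congr rfl fun j _ => ?_
          rw [h1 j, neg_mul, Finset.mul_sum, Finset.sum_mul, ← Finset.sum_neg_distrib]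
          exact Finset.sum_congr rfl fun i _ => by ring
      _ = ∑ i, ∑ j, (-δt) * (n i x * (gradf (μ i) x j * ustar x j)) := Finset.sum_comm
      _ = -δt * ∑ i, G i x := by
          rw [Finset.mul_sum]
          refine Finset.sum_congr rfl fun i _ => ?_
          simp only [hGdef, dot, gradf, pd]
          rw [Finset.mul_sum, Finset.mul_sum]
  have hH_int : Integrable H := by
    have : H = fun x => -δt * ∑ i, G i x := funext hH_eq
    rw [this]
    exact (integrable_finset_sum _ fun i _ => hG_int i).const_mul _
  -- pointwise inequality
  have hpt : ∀ x, ρ x * dot (ustar x) (ustar x) - ρ x * dot (u x) (u x) ≤ 2 * H x := by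
    intro x
    have hkey : dot (ustar x) (ustar x) - dot (u x) (u x) + dot (ustar x - u x) (ustar x - u x)
        = 2 * dot (ustar x - u x) (ustar x) := by
      simp only [dot, Pi.sub_apply, Finset.mul_sum, ← Finset.sum_sub_distrib,
        ← Finset.sum_add_distrib]
      exact Finset.sum_congr rfl fun i _ => by ring
    have hnn : 0 ≤ dot (ustar x - u x) (ustar x - u x) :=
      Finset.sum_nonneg fun i _ => mul_self_nonneg _
    have := mul_nonneg (hρ_nonneg x) hnn
    simp only [hHdef]
    nlinarith [hkey, hρ_nonneg x]
  -- integral inequality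
  have hint1 : (1/2) * (∫ x : Vec d, ρ x * dot (ustar x) (ustar x))
      - (1/2) * (∫ x : Vec d, ρ x * dot (u x) (u x)) ≤ ∫ x : Vec d, H x := by
    have h1 : ∫ x : Vec d, (ρ x * dot (ustar x) (ustar x) - ρ x * dot (u x) (u x))
        ≤ ∫ x : Vec d, 2 * H x :=
      integral_mono (hustar_int.sub hu_int) (hH_int.const_mul 2) hpt
    rw [integral_sub hustar_int hu_int, integral_const_mul] at h1
    linarith
  refine le_trans hint1 ?_
  -- integration by parts: ∫ divv(nᵢ u*) μᵢ = - ∫ G i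
  have hibp : ∀ i, ∫ x : Vec d, divv (fun y => n i y • ustar y) x * μ i x
      = - ∫ x : Vec d, G i x := by
    intro i
    have hfk : ∀ k : Fin d, ContDiff ℝ (⊤ : ℕ∞) (fun y => n i y * ustar y k) := fun k =>
      (hn' i).mul (hustk k)
    have hfks : ∀ k : Fin d, HasCompactSupport (fun y => n i y * ustar y k) := fun k =>
      (hn_supp i).mul_right
    have hcomm : ∀ x, divv (fun y => n i y • ustar y) x
        = ∑ k, fderiv ℝ (fun y => n i y * ustar y k) x (Pi.single k 1) := by
      intro x
      have hFeq : (fun y => n i y • ustar y) = fun y => fun k => n i y * ustar y k := by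
        funext y k; simp [smul_eq_mul]
      have hdfi : fderiv ℝ (fun y => fun k => n i y * ustar y k) x
          = ContinuousLinearMap.pi fun k => fderiv ℝ (fun y => n i y * ustar y k) x :=
        fderiv_pi fun k => ((hfk k).differentiable (by simp)) x
      simp only [divv, hFeq, hdfi, ContinuousLinearMap.pi_apply]
    have hstep : ∫ x : Vec d, divv (fun y => n i y • ustar y) x * μ i x
        = ∑ k, ∫ x : Vec d, fderiv ℝ (fun y => n i y * ustar y k) x (Pi.single k 1) * μ i x := by
      rw [← integral_finset_sum]
      · congr 1; funext x
        rw [hcomm x, Finset.sum_mul]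
      · intro k _
        apply Continuous.integrable_of_hasCompactSupport
        · exact (((hfk k).continuous_fderiv (by simp)).clm_apply continuous_const).mul
            ((hμ' i).continuous)
        · exact HasCompactSupport.intro (hn_supp i) fun x hx => by
            have : x ∉ tsupport fun y => n i y * ustar y k :=
              fun h => hx (closure_mono (Function.support_mul_subset_left _ _) h)
            rw [fderiv_eq_zero_of_nmem_tsupport this]; simp
    rw [hstep]
    have : ∀ k ∈ Finset.univ, (∫ x : Vec d,
        fderiv ℝ (fun y => n i y * ustar y k) x (Pi.single k 1) * μ i x)
        = - ∫ x : Vec d, (n i x * ustar x k) * fderiv ℝ (μ i) x (Pi.single k 1) := fun k _ =>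
      ibp_single (hfk k) (hfks k) (hμ' i) _
    rw [Finset.sum_congr rfl this, Finset.sum_neg_distrib, ← integral_finset_sum]
    · rw [neg_inj]
      congr 1; funext x
      simp only [hGdef, dot, gradf, pd]
      rw [Finset.mul_sum]
      exact Finset.sum_congr rfl fun k _ => by ring
    · intro k _
      apply Continuous.integrable_of_hasCompactSupport
      · exact (((hn' i).continuous).mul
          ((hustk k).continuous)).mul
          (((hμ' i).continuous_fderiv (by simp)).clm_apply continuous_const)
      · exact HasCompactSupport.intro (hn_supp i) fun x hx => by
          rw [image_eq_zero_of_notMem_tsupport hx]; simp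
  -- conclude
  have : ∫ x : Vec d, H x = δt * ∑ i, ∫ x : Vec d, divv (fun y => n i y • ustar y) x * μ i x := by
    have h1 : ∫ x : Vec d, H x = -δt * ∑ i, ∫ x : Vec d, G i x := by
      have : (fun x : Vec d => H x) = fun x => -δt * ∑ i, G i x := funext hH_eq
      rw [this, integral_const_mul, integral_finset_sum _ fun i _ => hG_int i]
    rw [h1]
    rw [Finset.sum_congr rfl fun i _ => hibp i]
    simp [Finset.mul_sum, Finset.sum_neg_distrib]
  rw [this]

end
end
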